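/- arXiv:2204.02370 — 5 statements merged into one kernel-verified Lean document; each statement's English description precedes it below -/
import Mathlib

section
/- For all natural numbers N ≥ 2 and a with 1 ≤ a < N, the smallest x_min such that the sequence a^x mod N is periodic from x_min onward satisfies x_min ≤ log₂ N. -/
/-!
Write `N = g * v` with `g = gcd(a^L, N)` and `L = log₂ N`. Every prime exponent of `N` is at most
`L`, so `g` already contains the full `p`-part of `N` for each prime `p ∣ a`, and `v` is coprime
to `a`. Euler's theorem gives `a^φ(v) ≡ 1 [MOD v]`; multiplying by `a^x` with `x ≥ L` lifts this
to `a^(x + φ(v)) ≡ a^x` modulo `a^x * v`, which is a multiple of `N`.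
-/

namespace Nat

theorem factorization_le_log_two (n p : ℕ) : n.factorization p ≤ log 2 n := by
  rcases eq_or_ne n 0 with rfl | hn
  · simp
  by_cases hp : p.Prime
  · apply le_log_of_pow_le one_lt_two
    calc 2 ^ n.factorization p ≤ p ^ n.factorization p := Nat.pow_le_pow_left hp.two_le _
      _ ≤ n := le_of_dvd (pos_of_ne_zero hn) (ordProj_dvd n p)
  · simp [factorization_eq_zero_of_not_prime n hp]

theorem coprime_div_gcd_pow {a n k : ℕ} (hn : n ≠ 0) (hk : ∀ p, n.factorization p ≤ k) :
    Coprime a (n / gcd (a ^ k) n) := by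
  refine coprime_of_dvd fun p hp hpa hpv => ?_
  have hgv : gcd (a ^ k) n * (n / gcd (a ^ k) n) = n := Nat.mul_div_cancel' (gcd_dvd_right _ _)
  have hpow : p ^ n.factorization p ∣ gcd (a ^ k) n :=
    dvd_gcd ((pow_dvd_pow_of_dvd hpa _).trans (pow_dvd_pow a (hk p))) (ordProj_dvd n p)
  have h := mul_dvd_mul hpow hpv
  rw [hgv, ← pow_succ] at h
  exact pow_succ_factorization_not_dvd hn hp h

theorem pow_add_totient_div_gcd_modEq {a n k x : ℕ} (hcop : Coprime a (n / gcd (a ^ k) n))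
    (hx : k ≤ x) : a ^ (x + φ (n / gcd (a ^ k) n)) ≡ a ^ x [MOD n] := by
  set v := n / gcd (a ^ k) n
  have hdvd : n ∣ a ^ x * v :=
    calc n = gcd (a ^ k) n * v := (Nat.mul_div_cancel' (gcd_dvd_right _ _)).symm
      _ ∣ a ^ x * v := mul_dvd_mul_right ((gcd_dvd_left _ _).trans (pow_dvd_pow a hx)) v
  have h := ((ModEq.pow_totient hcop).mul_left' (a ^ x)).of_dvd hdvd
  rwa [mul_one, ← pow_add] at h

end Nat

theorem xmin_le_log2_general (N a : ℕ) (hN : 2 ≤ N) :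
    ∃ r > 0, ∃ xmin : ℕ, xmin ≤ Nat.log 2 N ∧
      ∀ x ≥ xmin, a ^ (x + r) % N = a ^ x % N := by
  have hN0 : N ≠ 0 := by omega
  have hcop : Nat.Coprime a (N / Nat.gcd (a ^ Nat.log 2 N) N) :=
    Nat.coprime_div_gcd_pow hN0 (Nat.factorization_le_log_two N)
  have hv : 0 < N / Nat.gcd (a ^ Nat.log 2 N) N :=
    Nat.div_pos (Nat.gcd_le_right _ (by omega)) (Nat.gcd_pos_of_pos_right _ (by omega))
  exact ⟨_, Nat.totient_pos.mpr hv, _, le_rfl, fun x hx => Nat.pow_add_totient_div_gcd_modEq hcop hx⟩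

theorem xmin_le_log2 (N a : ℕ) (hN : 2 ≤ N) (ha : 1 ≤ a) (haN : a < N) :
    ∃ r > 0, ∃ xmin : ℕ, xmin ≤ Nat.log 2 N ∧
      ∀ x ≥ xmin, a ^ (x + r) % N = a ^ x % N :=
  xmin_le_log2_general N a hN
end

section
/- For 0 ≤ x ≤ 2, one has arccos(1 − x) ≤ √(2x) + x. -/
/-!
Put `θ = arccos (1 - x)` and `u = θ / 2 ∈ [0, π/2]`. Since `cos θ ≥ 1 - x`, the half-angle formula
gives `2 sin² u ≤ x`, hence `2 sin u ≤ √(2x)`, and it remains to show `u ≤ sin u + sin² u`.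
For `u ≤ 1` this follows from `sin u > u - u³/6`, for `u ≥ 1` from Jordan's inequality
`sin u ≥ 2u/π`.
-/

open Real

namespace Real

lemma le_cos_arccos {y : ℝ} (hy : y ≤ 1) : y ≤ cos (arccos y) := by
  rcases le_or_gt y (-1) with hy' | hy'
  · rw [arccos_of_le_neg_one hy', cos_pi]
    exact hy'
  · rw [cos_arccos hy'.le hy]

lemma le_sin_add_sin_sq_of_le_one {u : ℝ} (hu0 : 0 ≤ u) (hu1 : u ≤ 1) :
    u ≤ sin u + sin u ^ 2 := by
  rcases hu0.eq_or_lt with rfl | hu0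
  · simp
  have hcube : u - u ^ 3 / 6 ≤ sin u := (sin_gt_sub_cube hu0).le
  have hpos : 0 ≤ u - u ^ 3 / 6 := by nlinarith [pow_le_one₀ hu0.le hu1 (n := 2)]
  have hsq : (u - u ^ 3 / 6) ^ 2 ≤ sin u ^ 2 := pow_le_pow_left₀ hpos hcube 2
  nlinarith [pow_le_one₀ hu0.le hu1 (n := 2), pow_le_one₀ hu0.le hu1 (n := 3), pow_pos hu0 2]

lemma le_sin_add_sin_sq_of_one_le {u : ℝ} (hu1 : 1 ≤ u) (hu : u ≤ π / 2) :
    u ≤ sin u + sin u ^ 2 := by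
  have hjordan : 2 / π * u ≤ sin u := mul_le_sin (by linarith) hu
  have hsq : (2 / π * u) ^ 2 ≤ sin u ^ 2 := pow_le_pow_left₀ (by positivity) hjordan 2
  have hπa : π * (2 / π * u) = 2 * u := by field_simp
  have hpi : π ^ 2 ≤ 2 * π + 4 := by nlinarith [pi_gt_three, pi_lt_d2]
  nlinarith [pi_pos]

lemma le_sin_add_sin_sq {u : ℝ} (hu0 : 0 ≤ u) (hu : u ≤ π / 2) : u ≤ sin u + sin u ^ 2 := by
  rcases le_total u 1 with hu1 | hu1
  · exact le_sin_add_sin_sq_of_le_one hu0 hu1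
  · exact le_sin_add_sin_sq_of_one_le hu1 hu

end Real

theorem arccos_one_sub_le_general (x : ℝ) (hx0 : 0 ≤ x) :
    Real.arccos (1 - x) ≤ Real.sqrt (2 * x) + x := by
  set u := arccos (1 - x) / 2
  have hu0 : 0 ≤ u := div_nonneg (arccos_nonneg _) zero_le_two
  have huπ : u ≤ π / 2 := div_le_div_of_nonneg_right (arccos_le_pi _) zero_le_two
  have hsin : 0 ≤ sin u := sin_nonneg_of_nonneg_of_le_pi hu0 (by linarith [pi_pos])
  have hsin_sq : 2 * sin u ^ 2 ≤ x := by
    have hcos := le_cos_arccos (show 1 - x ≤ 1 by linarith)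
    rw [show arccos (1 - x) = 2 * u by ring, cos_two_mul, cos_sq'] at hcos
    linarith
  have hsqrt : 2 * sin u ≤ √(2 * x) :=
    (le_sqrt (by positivity) (by positivity)).2 (by nlinarith)
  calc arccos (1 - x) = 2 * u := by ring
    _ ≤ 2 * (sin u + sin u ^ 2) := by linarith [le_sin_add_sin_sq hu0 huπ]
    _ ≤ √(2 * x) + x := by linarith

theorem arccos_one_sub_le (x : ℝ) (hx0 : 0 ≤ x) (hx2 : x ≤ 2) :
    Real.arccos (1 - x) ≤ Real.sqrt (2 * x) + x :=
  arccos_one_sub_le_general x hx0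
end

section
/- For 0 ≤ x ≤ 2, one has arccos(1 − x) ≥ √x. -/
open Real

lemma Real.le_arccos_of_le_cos {a y : ℝ} (hy₀ : 0 ≤ y) (hyπ : y ≤ π) (h : a ≤ cos y) :
    y ≤ arccos a := by
  simpa only [arccos_cos hy₀ hyπ] using arccos_le_arccos h

lemma Real.sqrt_le_pi_of_le_four {x : ℝ} (hx : x ≤ 4) : √x ≤ π :=
  calc √x ≤ √4 := sqrt_le_sqrt hx
    _ = 2 := by rw [show (4 : ℝ) = 2 ^ 2 by norm_num, sqrt_sq zero_le_two]
    _ ≤ π := two_le_pi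

lemma Real.one_sub_div_two_le_cos_sqrt {x : ℝ} (hx : 0 ≤ x) : 1 - x / 2 ≤ cos √x := by
  simpa only [sq_sqrt hx] using one_sub_sq_div_two_le_cos (x := √x)

theorem arccos_one_sub_ge (x : ℝ) (hx0 : 0 ≤ x) (hx2 : x ≤ 2) :
    Real.arccos (1 - x) ≥ Real.sqrt x := by
  have hcos : 1 - x ≤ cos √x := by linarith [one_sub_div_two_le_cos_sqrt hx0]
  exact le_arccos_of_le_cos (sqrt_nonneg x) (sqrt_le_pi_of_le_four (by linarith)) hcos
end

section
/- Polynomial bound on the number of samples in the classical Grover simulation: for every polynomial t(n) there exists n₀ such that for all n ≥ n₀, with p = sin²((2t(n)+1)·arcsin(2^{−n/2})) < 1 and N = ⌈log(1−p)/log(1−2^{−n})⌉, one has N ≤ 8(2t(n)+1)² + 1. -/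
/-!
Write `k = 2t(n) + 1` and `y = 2^{-n}`. Since `arcsin √y ≤ 2√y` and `sin² u ≤ u²`, the success
probability satisfies `p ≤ 4k²y`. As `t` is polynomial, `8k² ≤ 2^n` for large `n`; then `p ≤ 1/2`,
so `-log(1 - p) ≤ 2p ≤ 8k²y ≤ 8k² · (-log(1 - y))`, which bounds the ratio of logarithms.
-/

open Filter Real

theorem Polynomial.eval_le_eval_one_mul_pow (P : Polynomial ℕ) {n : ℕ} (hn : 1 ≤ n) :
    P.eval n ≤ P.eval 1 * n ^ P.natDegree := by
  rw [Polynomial.eval_eq_sum_range, Polynomial.eval_eq_sum_range, Finset.sum_mul]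
  refine Finset.sum_le_sum fun i hi => ?_
  rw [one_pow, mul_one]
  exact Nat.mul_le_mul_left _
    (Nat.pow_le_pow_right hn (Nat.lt_succ_iff.mp (Finset.mem_range.mp hi)))

theorem Polynomial.eventually_eval_le_pow (P : Polynomial ℕ) {b : ℕ} (hb : 1 < b) :
    ∀ᶠ n in atTop, P.eval n ≤ b ^ n := by
  have hlittle := (isLittleO_pow_const_const_pow_of_one_lt (R := ℝ) P.natDegree
    (r := b) (by exact_mod_cast hb)).const_mul_left ((P.eval 1 : ℕ) : ℝ)
  filter_upwards [hlittle.eventuallyLE, eventually_ge_atTop 1] with n hle hn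
  refine (P.eval_le_eval_one_mul_pow hn).trans ?_
  have hle' : ((P.eval 1 : ℕ) : ℝ) * (n : ℝ) ^ P.natDegree ≤ (b : ℝ) ^ n := by simpa using hle
  exact_mod_cast hle'

theorem Real.arcsin_le_two_mul {x : ℝ} (hx₀ : 0 ≤ x) (hx₁ : x ≤ 1) : arcsin x ≤ 2 * x := by
  have hsin : arcsin x ≤ π / 2 * x :=
    (arcsin_le_iff_le_sin ⟨by linarith, hx₁⟩
      ⟨by nlinarith [pi_pos], by nlinarith [pi_pos]⟩).2 (le_sin_mul hx₀ hx₁)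
  nlinarith [pi_le_four]

theorem Real.sin_mul_arcsin_sq_le {k x : ℝ} (hk : 0 ≤ k) (hx₀ : 0 ≤ x) (hx₁ : x ≤ 1) :
    sin (k * arcsin x) ^ 2 ≤ 4 * k ^ 2 * x ^ 2 :=
  calc sin (k * arcsin x) ^ 2 ≤ (k * arcsin x) ^ 2 := sin_sq_le_sq
    _ ≤ (k * (2 * x)) ^ 2 := by
        gcongr
        · exact mul_nonneg hk (arcsin_nonneg.2 hx₀)
        · exact arcsin_le_two_mul hx₀ hx₁
    _ = 4 * k ^ 2 * x ^ 2 := by ring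

theorem Real.neg_log_one_sub_le_two_mul {p : ℝ} (hp₀ : 0 ≤ p) (hp : p ≤ 1 / 2) :
    -log (1 - p) ≤ 2 * p := by
  have hinv : (1 - p)⁻¹ ≤ 1 + 2 * p := by
    rw [inv_le_iff_one_le_mul₀ (by linarith)]
    nlinarith
  linarith [one_sub_inv_le_log_of_pos (x := 1 - p) (by linarith)]

theorem Real.log_one_sub_div_log_one_sub_le {p y c : ℝ} (hp₀ : 0 ≤ p) (hp : p ≤ 1 / 2)
    (hy₀ : 0 < y) (hy₁ : y < 1) (hpy : 2 * p ≤ c * y) :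
    log (1 - p) / log (1 - y) ≤ c := by
  have hc : 0 ≤ c := nonneg_of_mul_nonneg_left (by linarith) hy₀
  have hlog_y : log (1 - y) ≤ -y := by linarith [log_le_sub_one_of_pos (x := 1 - y) (by linarith)]
  rw [div_le_iff_of_neg (log_neg (by linarith) (by linarith))]
  nlinarith [neg_log_one_sub_le_two_mul hp₀ hp, mul_le_mul_of_nonneg_left hlog_y hc]

theorem grover_sample_count_le {k n : ℕ} (hk : 0 < k) (hkn : 8 * k ^ 2 ≤ 2 ^ n) :
    ⌈log (1 - sin ((k : ℝ) * arcsin ((2 : ℝ) ^ (-(n : ℝ) / 2))) ^ 2) /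
        log (1 - (2 : ℝ) ^ (-(n : ℝ)))⌉₊ ≤ 8 * k ^ 2 + 1 := by
  set x : ℝ := (2 : ℝ) ^ (-(n : ℝ) / 2) with hx
  set y : ℝ := (2 : ℝ) ^ (-(n : ℝ)) with hy
  have hx₀ : 0 ≤ x := rpow_nonneg zero_le_two _
  have hx₁ : x ≤ 1 :=
    rpow_le_one_of_one_le_of_nonpos one_le_two (by linarith [(n.cast_nonneg : (0 : ℝ) ≤ n)])
  have hxy : x ^ 2 = y := by rw [hx, hy, ← rpow_mul_natCast zero_le_two]; ring_nf
  have hy_inv : y = ((2 : ℝ) ^ n)⁻¹ := by rw [hy, rpow_neg zero_le_two, rpow_natCast]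
  have hn : n ≠ 0 := by rintro rfl; nlinarith
  have hkny : 8 * (k : ℝ) ^ 2 * y ≤ 1 := by
    rw [hy_inv, ← div_eq_mul_inv, div_le_one (by positivity)]; exact_mod_cast hkn
  have hp := sin_mul_arcsin_sq_le (k := k) (Nat.cast_nonneg _) hx₀ hx₁
  rw [hxy] at hp
  rw [Nat.ceil_le]
  push_cast
  refine log_one_sub_div_log_one_sub_le (sq_nonneg _) (by linarith) (by positivity) ?_
    (by nlinarith)
  rw [hy_inv]; exact inv_lt_one_of_one_lt₀ (one_lt_pow₀ one_lt_two hn)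

theorem grover_sample_count_poly_bound (t : ℕ → ℕ) (P : Polynomial ℕ)
    (hP : ∀ n, t n = P.eval n) :
    ∃ n₀ : ℕ, ∀ n ≥ n₀,
      (Real.sin (((2 * t n + 1 : ℕ) : ℝ) *
          Real.arcsin ((2 : ℝ) ^ (-(n : ℝ) / 2)))) ^ 2 < 1 →
      (⌈Real.log (1 - (Real.sin (((2 * t n + 1 : ℕ) : ℝ) *
            Real.arcsin ((2 : ℝ) ^ (-(n : ℝ) / 2)))) ^ 2) /
          Real.log (1 - (2 : ℝ) ^ (-(n : ℝ)))⌉₊ : ℕ) ≤ 8 * (2 * t n + 1) ^ 2 + 1 := by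
  obtain ⟨n₀, hn₀⟩ := ((Polynomial.C 8 * (2 * P + 1) ^ 2).eventually_eval_le_pow
    one_lt_two).exists_forall_of_atTop
  refine ⟨n₀, fun n hn _ => grover_sample_count_le (Nat.succ_pos _) ?_⟩
  simpa [hP] using hn₀ n hn
end

section
/- Grover success probability formula: in the n-qubit Grover iteration with a unique marked element, after t iterations the probability of measuring the marked element is sin²((2t+1)·θ) where sin θ = 2^{−n/2}; in particular, the state after t iterations lies in the 2-dimensional real span of the uniform superposition and the marked basis state, and the amplitude on the marked state is sin((2t+1)θ). -/
/-- The uniform superposition over all `2^n` basis states. -/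
noncomputable def groverState (n : ℕ) : Fin (2 ^ n) → ℂ :=
  fun _ => ((Real.sqrt (2 ^ n))⁻¹ : ℝ)

/-- The oracle `U_f`, flipping the sign of the marked basis state `x₀`. -/
def groverOracle (n : ℕ) (x₀ : Fin (2 ^ n)) (v : Fin (2 ^ n) → ℂ) : Fin (2 ^ n) → ℂ :=
  fun x => if x = x₀ then -v x else v x

/-- The diffusion operator `D = 2|s⟩⟨s| - I` (equal to `H^{⊗n} U_g H^{⊗n}` up to sign). -/
noncomputable def groverDiffusion (n : ℕ) (v : Fin (2 ^ n) → ℂ) : Fin (2 ^ n) → ℂ :=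
  fun x => 2 * (∑ y, (starRingEnd ℂ) (groverState n y) * v y) * groverState n x - v x

/-!
Both the oracle and the diffusion map the real span of `|s⟩` and `|x₀⟩` to itself, so every
iterate is `α |s⟩ + β |x₀⟩`. In that plane the oracle is the reflection in the axis `|s⊥⟩`
orthogonal to `|x₀⟩` and the diffusion the reflection in `|s⟩`, which makes the angle `θ` with
`|s⊥⟩`, where `sin θ = ⟨x₀|s⟩ = 2^{-n/2}`. Their product is the rotation by `2θ`, so starting
from `|s⟩`, at angle `θ`, the `t`-th iterate is at angle `(2t+1)θ` and its `|x₀⟩`-component is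
`sin ((2t+1)θ)`.
-/

namespace Grover

open Real

noncomputable def uniformAmplitude (n : ℕ) : ℝ := (√(2 ^ n))⁻¹

lemma uniformAmplitude_sq_mul (n : ℕ) : uniformAmplitude n ^ 2 * 2 ^ n = 1 := by
  rw [uniformAmplitude, inv_pow, sq_sqrt (by positivity), inv_mul_cancel₀ (by positivity)]

lemma sin_arcsin_uniformAmplitude (n : ℕ) :
    sin (arcsin (uniformAmplitude n)) = uniformAmplitude n := by
  have h0 : 0 ≤ uniformAmplitude n := by unfold uniformAmplitude; positivity
  have h1 : uniformAmplitude n ≤ 1 :=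
    inv_le_one_of_one_le₀ (one_le_sqrt.2 (one_le_pow₀ one_le_two))
  exact sin_arcsin (by linarith) h1

lemma groverState_apply (n : ℕ) (x : Fin (2 ^ n)) :
    groverState n x = (uniformAmplitude n : ℂ) := rfl

noncomputable def planeState (n : ℕ) (x₀ : Fin (2 ^ n)) (α β : ℝ) : Fin (2 ^ n) → ℂ :=
  fun x => (α : ℂ) * groverState n x + (β : ℂ) * (if x = x₀ then 1 else 0)

variable {n : ℕ} {x₀ : Fin (2 ^ n)}

lemma planeState_one_zero : planeState n x₀ 1 0 = groverState n := by
  funext x; simp [planeState]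

lemma planeState_apply_self (α β : ℝ) :
    planeState n x₀ α β x₀ = ((α * uniformAmplitude n + β : ℝ) : ℂ) := by
  simp [planeState, groverState_apply]

lemma groverOracle_planeState (α β : ℝ) :
    groverOracle n x₀ (planeState n x₀ α β) =
      planeState n x₀ α (-(2 * uniformAmplitude n * α + β)) := by
  funext x
  by_cases hx : x = x₀
  · subst hx
    simp only [groverOracle, planeState, groverState_apply, ↓reduceIte, mul_one]
    push_cast
    ring
  · simp [groverOracle, planeState, hx]

lemma sum_conj_groverState_mul_planeState (α β : ℝ) :
    ∑ y, starRingEnd ℂ (groverState n y) * planeState n x₀ α β y =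
      ((α + uniformAmplitude n * β : ℝ) : ℂ) := by
  have hnorm : ((uniformAmplitude n ^ 2 * 2 ^ n : ℝ) : ℂ) = 1 := by
    rw [uniformAmplitude_sq_mul]; simp
  simp only [planeState, groverState_apply, Complex.conj_ofReal, mul_add, Finset.sum_add_distrib,
    mul_ite, mul_one, mul_zero, Finset.sum_ite_eq', Finset.mem_univ, if_true, Finset.sum_const,
    Finset.card_univ, Fintype.card_fin, nsmul_eq_mul]
  push_cast at hnorm ⊢
  linear_combination (α : ℂ) * hnorm

lemma groverDiffusion_planeState (α β : ℝ) :
    groverDiffusion n (planeState n x₀ α β) =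
      planeState n x₀ (α + 2 * uniformAmplitude n * β) (-β) := by
  funext x
  rw [groverDiffusion, sum_conj_groverState_mul_planeState]
  simp only [planeState]
  push_cast
  ring

lemma groverStep_planeState (α β : ℝ) :
    (groverDiffusion n ∘ groverOracle n x₀) (planeState n x₀ α β) =
      planeState n x₀ (α - 2 * uniformAmplitude n * (2 * uniformAmplitude n * α + β))
        (2 * uniformAmplitude n * α + β) := by
  rw [Function.comp_apply, groverOracle_planeState, groverDiffusion_planeState, neg_neg]
  congr 1
  ring

/-- Writing `|s⟩ = sin θ |x₀⟩ + cos θ |s⊥⟩`, this says `α |s⟩ + β |x₀⟩ = sin φ |x₀⟩ + cos φ |s⊥⟩`;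
it is stated without dividing by `cos θ`, so it is meaningful also when `|s⟩ = |x₀⟩` (`n = 0`). -/
def AtAngle (θ φ α β : ℝ) : Prop :=
  α * cos θ = cos φ ∧ α * sin θ + β = sin φ

lemma atAngle_one_zero (θ : ℝ) : AtAngle θ θ 1 0 := by
  simp [AtAngle]

lemma AtAngle.step {θ φ α β : ℝ} (h : AtAngle θ φ α β) :
    AtAngle θ (φ + 2 * θ) (α - 2 * sin θ * (2 * sin θ * α + β)) (2 * sin θ * α + β) := by
  obtain ⟨hcos, hsin⟩ := h
  have hpyth := sin_sq_add_cos_sq θ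
  constructor
  · rw [cos_add, sin_two_mul, cos_two_mul]
    linear_combination (2 * cos θ ^ 2 - 1) * hcos - 2 * sin θ * cos θ * hsin
      - 2 * α * cos θ * hpyth
  · rw [sin_add, sin_two_mul, cos_two_mul]
    linear_combination (2 * cos θ ^ 2 - 1) * hsin + 2 * sin θ * cos θ * hcos
      - (4 * α * sin θ + 2 * β) * hpyth

lemma exists_iterate_eq_planeState_atAngle (t : ℕ) :
    ∃ α β : ℝ, (groverDiffusion n ∘ groverOracle n x₀)^[t] (groverState n) =
        planeState n x₀ α β ∧
      AtAngle (arcsin (uniformAmplitude n)) ((2 * t + 1) * arcsin (uniformAmplitude n)) α β := by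
  set θ := arcsin (uniformAmplitude n)
  have hsin : sin θ = uniformAmplitude n := sin_arcsin_uniformAmplitude n
  induction t with
  | zero => exact ⟨1, 0, planeState_one_zero.symm, by simpa using atAngle_one_zero θ⟩
  | succ t ih =>
    obtain ⟨α, β, hstate, hangle⟩ := ih
    refine ⟨_, _, by rw [Function.iterate_succ_apply', hstate, groverStep_planeState], ?_⟩
    have hφ : (2 * ((t + 1 : ℕ) : ℝ) + 1) * θ = (2 * t + 1) * θ + 2 * θ := by push_cast; ring
    rw [hφ, ← hsin]
    exact hangle.step

end Grover

theorem grover_success_amplitude_general (n : ℕ) (x₀ : Fin (2 ^ n)) (t : ℕ) :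
    ((groverDiffusion n ∘ groverOracle n x₀)^[t] (groverState n)) x₀ =
      ((Real.sin ((2 * t + 1) * Real.arcsin ((Real.sqrt (2 ^ n))⁻¹)) : ℝ) : ℂ) ∧
    ∃ α β : ℝ, (groverDiffusion n ∘ groverOracle n x₀)^[t] (groverState n) =
      fun x => (α : ℂ) * groverState n x + (β : ℂ) * (if x = x₀ then 1 else 0) := by
  obtain ⟨α, β, hstate, -, hamp⟩ := Grover.exists_iterate_eq_planeState_atAngle (x₀ := x₀) t
  rw [hstate]
  refine ⟨?_, α, β, rfl⟩
  rw [Grover.planeState_apply_self, ← Grover.sin_arcsin_uniformAmplitude n, hamp]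
  rfl

theorem grover_success_amplitude (n : ℕ) (hn : 1 ≤ n) (x₀ : Fin (2 ^ n)) (t : ℕ) :
    ((groverDiffusion n ∘ groverOracle n x₀)^[t] (groverState n)) x₀ =
      ((Real.sin ((2 * t + 1) * Real.arcsin ((Real.sqrt (2 ^ n))⁻¹)) : ℝ) : ℂ) ∧
    ∃ α β : ℝ, (groverDiffusion n ∘ groverOracle n x₀)^[t] (groverState n) =
      fun x => (α : ℂ) * groverState n x + (β : ℂ) * (if x = x₀ then 1 else 0) :=
  grover_success_amplitude_general n x₀ t
end
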